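/- Let a : Ω → ℝ be a smooth function on Ω = {x ∈ ℝ⁴ : x₁²+x₂² ≠ 0} depending only on (x₁,x₂,x₃). If there exists a smooth g on Ω, also depending only on (x₁,x₂,x₃), such that x₂ ∂₃g + x₁ ∂₂g = a, then the limit as x₁ → 0⁺ of ∫₋₁¹ a(x₁, s, −1/(2x₁) + s²/(2x₁)) ds / x₁ exists. -/

import Mathlib

noncomputable def pd (i : Fin 4) (f : (Fin 4 → ℝ) → ℝ) (x : Fin 4 → ℝ) : ℝ :=
  fderiv ℝ f x (Pi.single i 1)

def Omega : Set (Fin 4 → ℝ) := {x | (x 0) ^ 2 + (x 1) ^ 2 ≠ 0}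

lemma omegaOpen : IsOpen Omega := by
  have hc : Continuous fun x : Fin 4 → ℝ => (x 0) ^ 2 + (x 1) ^ 2 := by continuity
  exact isOpen_compl_singleton.preimage hc

/-- If `a`, smooth on `Ω` and depending only on `(x₁,x₂,x₃)`,
is of the form `a = H_{x₄} g = x₂ ∂₃ g + x₁ ∂₂ g` for a smooth `g` on `Ω`
depending only on `(x₁,x₂,x₃)`, then
`lim_{x₁→0⁺} (1/x₁) ∫_{-1}^{1} a(x₁, s, −1/(2x₁) + s²/(2x₁)) ds` exists. -/
theorem g41_lemma3 (a g : (Fin 4 → ℝ) → ℝ)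
    (ha : ContDiffOn ℝ (⊤ : ℕ∞) a Omega) (hg : ContDiffOn ℝ (⊤ : ℕ∞) g Omega)
    (ha3 : ∀ x y : Fin 4 → ℝ, x 0 = y 0 → x 1 = y 1 → x 2 = y 2 → a x = a y)
    (hg3 : ∀ x y : Fin 4 → ℝ, x 0 = y 0 → x 1 = y 1 → x 2 = y 2 → g x = g y)
    (hpde : ∀ x ∈ Omega, x 1 * pd 2 g x + x 0 * pd 1 g x = a x) :
    ∃ L : ℝ, Filter.Tendsto
      (fun x₁ : ℝ => (1 / x₁) * ∫ s in (-1 : ℝ)..1,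
        a ![x₁, s, -1 / (2 * x₁) + s ^ 2 / (2 * x₁), 0])
      (nhdsWithin 0 (Set.Ioi 0)) (nhds L) := by
  have hOpen : IsOpen Omega := omegaOpen
  -- Key identity for x₁ > 0
  have key : ∀ x₁ : ℝ, 0 < x₁ →
      (1 / x₁) * (∫ s in (-1 : ℝ)..1,
        a ![x₁, s, -1 / (2 * x₁) + s ^ 2 / (2 * x₁), 0])
      = g ![x₁, 1, 0, 0] - g ![x₁, -1, 0, 0] := by
    intro x₁ hx
    have hx' : x₁ ≠ 0 := hx.ne'
    set c : ℝ → Fin 4 → ℝ := fun s => ![x₁, s, -1 / (2 * x₁) + s ^ 2 / (2 * x₁), 0] with hcdef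
    have hcmem : ∀ s, c s ∈ Omega := by
      intro s
      have : (0:ℝ) < x₁ ^ 2 + s ^ 2 := by positivity
      simpa [Omega, hcdef] using this.ne'
    have hccont : Continuous c := by
      apply continuous_pi
      intro i
      fin_cases i <;> simp [hcdef] <;> fun_prop
    have hcderiv : ∀ s : ℝ, HasDerivAt c (![0, 1, s / x₁, 0]) s := by
      intro s
      rw [hasDerivAt_pi]
      intro i
      fin_cases i <;> simp [hcdef]
      · exact hasDerivAt_const _ _
      · exact hasDerivAt_id _
      · have h := (hasDerivAt_pow 2 s).div_const (2 * x₁)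
        refine h.congr_deriv ?_
        norm_num
        field_simp
      · exact hasDerivAt_const _ _
    -- derivative of g ∘ c
    have hF : ∀ s : ℝ, HasDerivAt (fun u => g (c u)) ((1 / x₁) * a (c s)) s := by
      intro s
      have hgd : DifferentiableAt ℝ g (c s) :=
        (hg.differentiableOn (by simp)).differentiableAt (hOpen.mem_nhds (hcmem s))
      have hcomp := hgd.hasFDerivAt.comp_hasDerivAt s (hcderiv s)
      have hvec : (![0, 1, s / x₁, 0] : Fin 4 → ℝ)
          = (Pi.single (1 : Fin 4) (1:ℝ) : Fin 4 → ℝ)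
            + (s / x₁) • (Pi.single (2 : Fin 4) (1:ℝ) : Fin 4 → ℝ) := by
        funext i
        fin_cases i <;> simp [Pi.single_apply]
      have hp := hpde (c s) (hcmem s)
      have h0 : (c s) 0 = x₁ := by simp [hcdef]
      have h1 : (c s) 1 = s := by simp [hcdef]
      rw [h0, h1] at hp
      have heq : fderiv ℝ g (c s) (![0, 1, s / x₁, 0]) = (1 / x₁) * a (c s) := by
        rw [hvec, map_add, map_smul]
        show pd 1 g (c s) + (s / x₁) * pd 2 g (c s) = (1 / x₁) * a (c s)
        field_simp
        linarith [hp]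
      rw [heq] at hcomp
      exact hcomp
    -- integrability of the derivative
    have hacont : Continuous fun s => (1 / x₁) * a (c s) := by
      apply continuous_const.mul
      rw [continuous_iff_continuousAt]
      intro s
      exact (ha.continuousOn.continuousAt (hOpen.mem_nhds (hcmem s))).comp hccont.continuousAt
    have hFTC : ∫ s in (-1 : ℝ)..1, (1 / x₁) * a (c s) = g (c 1) - g (c (-1)) :=
      intervalIntegral.integral_eq_sub_of_hasDerivAt (fun s _ => hF s)
        (hacont.intervalIntegrable _ _)
    rw [intervalIntegral.integral_const_mul] at hFTC
    have hc1 : c 1 = ![x₁, 1, 0, 0] := by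
      funext i
      fin_cases i <;> simp [hcdef]
      field_simp
      ring
    have hcm1 : c (-1) = ![x₁, -1, 0, 0] := by
      funext i
      fin_cases i <;> simp [hcdef]
      field_simp
      ring
    rw [hc1, hcm1] at hFTC
    exact hFTC
  -- limit of the right-hand side
  refine ⟨g ![0, 1, 0, 0] - g ![0, -1, 0, 0], ?_⟩
  have hmem1 : (![0, 1, 0, 0] : Fin 4 → ℝ) ∈ Omega := by
    simp [Omega]
  have hmem2 : (![0, -1, 0, 0] : Fin 4 → ℝ) ∈ Omega := by
    simp [Omega]
  have hcurve : ∀ r : ℝ, Continuous fun t : ℝ => (![t, r, 0, 0] : Fin 4 → ℝ) := by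
    intro r
    apply continuous_pi
    intro i
    fin_cases i <;> simp <;> fun_prop
  have hg1 : ContinuousAt (fun t : ℝ => g ![t, 1, 0, 0]) 0 := by
    show ContinuousAt (g ∘ fun t : ℝ => (![t, 1, 0, 0] : Fin 4 → ℝ)) 0
    exact ContinuousAt.comp (hg.continuousOn.continuousAt (hOpen.mem_nhds hmem1))
      (hcurve 1).continuousAt
  have hg2 : ContinuousAt (fun t : ℝ => g ![t, -1, 0, 0]) 0 := by
    show ContinuousAt (g ∘ fun t : ℝ => (![t, -1, 0, 0] : Fin 4 → ℝ)) 0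
    exact ContinuousAt.comp (hg.continuousOn.continuousAt (hOpen.mem_nhds hmem2))
      (hcurve (-1)).continuousAt
  have htend : Filter.Tendsto (fun t : ℝ => g ![t, 1, 0, 0] - g ![t, -1, 0, 0])
      (nhdsWithin 0 (Set.Ioi 0)) (nhds (g ![0, 1, 0, 0] - g ![0, -1, 0, 0])) :=
    ((hg1.sub hg2).tendsto).mono_left nhdsWithin_le_nhds
  refine htend.congr' ?_
  filter_upwards [self_mem_nhdsWithin] with t ht
  exact (key t ht).symm
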